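/- For m ≥ 2, the distinguishing index of the Mycielskian of the star K_{1,m} equals the minimum natural number r such that r² ≥ m + 1; in particular Dist′(μ(K_{1,m})) ≤ m = Dist′(K_{1,m}). -/

import Mathlib

open SimpleGraph

universe u

/-- A distinguishing edge coloring: no nontrivial automorphism preserves the coloring. -/
def IsDistEdgeColoring {V : Type u} (G : SimpleGraph V) {C : Type*} (c : G.edgeSet → C) : Prop :=
  ∀ φ : G ≃g G, (∀ e : G.edgeSet, c (φ.mapEdgeSet e) = c e) → ∀ v, φ v = v

/-- The distinguishing index: least number of colors in a distinguishing edge coloring. -/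
noncomputable def distIndex {V : Type u} (G : SimpleGraph V) : ℕ :=
  sInf {k : ℕ | ∃ c : G.edgeSet → Fin k, IsDistEdgeColoring G c}

/-- The star `K_{1,m}` with center `0`. -/
def starGraph (m : ℕ) : SimpleGraph (Fin (m + 1)) :=
  SimpleGraph.fromRel fun a _ => a = 0

/-- The Mycielskian: `Sum.inl a` are original vertices, `Sum.inr (Sum.inl a)` their
shadows, and `Sum.inr (Sum.inr _)` the root. -/
def myc {V : Type u} (G : SimpleGraph V) : SimpleGraph (V ⊕ V ⊕ PUnit.{u+1}) :=
  SimpleGraph.fromRel fun x y =>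
    match x, y with
    | Sum.inl a, Sum.inl b => G.Adj a b
    | Sum.inl a, Sum.inr (Sum.inl b) => G.Adj a b
    | Sum.inr (Sum.inl _), Sum.inr (Sum.inr _) => True
    | _, _ => False

/-- The generalized Mycielskian with `t` extra levels: `Sum.inl (j, a)` is the level-`j`
copy of vertex `a` (level `0` being the original vertices), and `Sum.inr _` is the root. -/
def genMyc {V : Type u} (G : SimpleGraph V) (t : ℕ) :
    SimpleGraph ((Fin (t + 1) × V) ⊕ PUnit.{u+1}) :=
  SimpleGraph.fromRel fun x y =>
    match x, y with
    | Sum.inl (j, a), Sum.inl (k, b) =>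
        ((j.val = 0 ∧ k.val = 0) ∨ k.val = j.val + 1) ∧ G.Adj a b
    | Sum.inl (j, _), Sum.inr _ => j.val = t
    | _, _ => False


/-!
For `m ≥ 2` every automorphism of `μ(K_{1,m})` fixes the centre `v 0`: it is the only vertex with
three neighbours none of which has three neighbours. So automorphisms permute the `2m` neighbours
of `v 0`, the leaves, and each leaf has exactly one further neighbour, its hub (`u 0` for the
leaves `v a`, `w` for the leaves `u a`); the two hubs are fixed or swapped. Hence an edge colouring
is distinguishing iff no automorphism other than the identity preserves the profile of every leaf,
the pair of colours on its two edges.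

With `r` colours there are `r²` profiles. If `r² ≥ m + 1`, pick distinct profiles `P 0, …, P m`
and give `v a` the profile `P a` and `u a` the profile `P (a - 1)`: leaves with the same hub have
different profiles, and swapping the hubs would send `u 1`, of profile `P 0`, to some `v a`, of
profile `P a` with `a ≠ 0`. If `r² ≤ m`, either two leaves with the same hub share a profile and
transposing them preserves the colouring, or both families of leaves realise all `r²` profiles,
and a profile-preserving bijection between them extends to an automorphism exchanging the hubs.
The star `K_{1,m}` is the same argument with one colour per leaf.
-/

open Function

namespace SimpleGraph

variable {V : Type u} {W : Type*} {C : Type*}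

section Mycielskian

variable {G : SimpleGraph V} {a b : V} {r : PUnit.{u+1}}

@[simp] lemma myc_adj_inl_inl : (myc G).Adj (Sum.inl a) (Sum.inl b) ↔ G.Adj a b := by
  simpa [myc, G.adj_comm b a] using fun h => h.ne

@[simp] lemma myc_adj_inl_inr : (myc G).Adj (Sum.inl a) (Sum.inr (Sum.inl b)) ↔ G.Adj a b := by
  simp [myc]

@[simp] lemma myc_adj_inr_inl : (myc G).Adj (Sum.inr (Sum.inl a)) (Sum.inl b) ↔ G.Adj a b := by
  simp [myc, G.adj_comm]

@[simp] lemma myc_adj_inr_inl_inr_inr :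
    (myc G).Adj (Sum.inr (Sum.inl a)) (Sum.inr (Sum.inr r)) := by
  simp [myc]

@[simp] lemma myc_adj_inr_inr_inr_inl :
    (myc G).Adj (Sum.inr (Sum.inr r)) (Sum.inr (Sum.inl a)) := by
  simp [myc]

@[simp] lemma not_myc_adj_inl_inr_inr : ¬(myc G).Adj (Sum.inl a) (Sum.inr (Sum.inr r)) := by
  simp [myc]

@[simp] lemma not_myc_adj_inr_inr_inl : ¬(myc G).Adj (Sum.inr (Sum.inr r)) (Sum.inl a) := by
  simp [myc]

@[simp] lemma not_myc_adj_inr_inl_inr_inl :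
    ¬(myc G).Adj (Sum.inr (Sum.inl a)) (Sum.inr (Sum.inl b)) := by
  simp [myc]

end Mycielskian

def HasThreeNeighbors (G : SimpleGraph V) (x : V) : Prop :=
  ∃ a b c, a ≠ b ∧ a ≠ c ∧ b ≠ c ∧ G.Adj x a ∧ G.Adj x b ∧ G.Adj x c

lemma HasThreeNeighbors.map {G : SimpleGraph V} {G' : SimpleGraph W} (φ : G ≃g G') {x : V}
    (h : G.HasThreeNeighbors x) : G'.HasThreeNeighbors (φ x) := by
  obtain ⟨a, b, c, hab, hac, hbc, ha, hb, hc⟩ := h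
  exact ⟨φ a, φ b, φ c, by simpa, by simpa, by simpa,
    φ.map_adj_iff.2 ha, φ.map_adj_iff.2 hb, φ.map_adj_iff.2 hc⟩

section EdgeColoring

variable {G : SimpleGraph V} (c : G.edgeSet → C)

noncomputable def extendEdgeColoring (e : Sym2 V) : Option C :=
  open Classical in if h : e ∈ G.edgeSet then some (c ⟨e, h⟩) else none

variable {c}

lemma extendEdgeColoring_of_mem {e : Sym2 V} (h : e ∈ G.edgeSet) :
    extendEdgeColoring c e = some (c ⟨e, h⟩) := by
  simp [extendEdgeColoring, h]

lemma extendEdgeColoring_of_not_mem {e : Sym2 V} (h : e ∉ G.edgeSet) :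
    extendEdgeColoring c e = none := by
  simp [extendEdgeColoring, h]

lemma isDistEdgeColoring_iff_extendEdgeColoring :
    IsDistEdgeColoring G c ↔ ∀ φ : G ≃g G,
      (∀ e : Sym2 V, extendEdgeColoring c (e.map φ) = extendEdgeColoring c e) → ∀ x, φ x = x := by
  refine forall_congr' fun φ => imp_congr_left ⟨fun h e => ?_, fun h e => ?_⟩
  · by_cases he : e ∈ G.edgeSet
    · rw [extendEdgeColoring_of_mem ((φ.map_mem_edgeSet_iff).2 he), extendEdgeColoring_of_mem he]
      exact congrArg some (h ⟨e, he⟩)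
    · rw [extendEdgeColoring_of_not_mem (mt (φ.map_mem_edgeSet_iff).1 he),
        extendEdgeColoring_of_not_mem he]
  · have := h e
    rwa [extendEdgeColoring_of_mem ((φ.map_mem_edgeSet_iff).2 e.2),
      extendEdgeColoring_of_mem e.2, Option.some_inj] at this

end EdgeColoring

lemma distIndex_eq_sInf {G : SimpleGraph V} {P : ℕ → Prop}
    (h : ∀ k, (∃ c : G.edgeSet → Fin k, IsDistEdgeColoring G c) ↔ P k) :
    distIndex G = sInf {k | P k} :=
  congrArg sInf (Set.ext h)

end SimpleGraph

open SimpleGraph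

lemma exists_injOn_Iic {C : Type*} [Fintype C] {n : ℕ} (h : n + 1 ≤ Fintype.card C) :
    ∃ ι : ℕ → C, Set.InjOn ι (Set.Iic n) := by
  obtain ⟨e⟩ := Function.Embedding.nonempty_of_card_le (α := Fin (n + 1)) (by simpa using h)
  refine ⟨fun j => e (Fin.ofNat (n + 1) j), fun i hi j hj hij => ?_⟩
  have := congrArg Fin.val (e.injective hij)
  simp only [Set.mem_Iic] at hi hj
  rwa [Fin.val_ofNat, Fin.val_ofNat, Nat.mod_eq_of_lt (by omega),
    Nat.mod_eq_of_lt (by omega)] at this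

lemma exists_equiv_apply_eq_of_injective {α β : Type*} {s : Set β} [Finite s] {f g : α → β}
    (hf : Injective f) (hg : Injective g) (hfs : ∀ a, f a ∈ s) (hgs : ∀ a, g a ∈ s)
    (hcard : Nat.card s ≤ Nat.card α) : ∃ ρ : α ≃ α, ∀ a, g (ρ a) = f a := by
  have bij_f := (hf.codRestrict hfs).bijective_of_nat_card_le hcard
  have bij_g := (hg.codRestrict hgs).bijective_of_nat_card_le hcard
  refine ⟨(Equiv.ofBijective _ bij_f).trans (Equiv.ofBijective _ bij_g).symm, fun a => ?_⟩
  exact congrArg Subtype.val ((Equiv.ofBijective _ bij_g).apply_symm_apply _)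

lemma apply_ofSubtype_swap_eq_self {α β : Type*} [DecidableEq α] {p : α → Prop}
    [DecidablePred p] {f : α → β} {a b : Subtype p} (h : f a = f b) (x : α) :
    f (Equiv.Perm.ofSubtype (Equiv.swap a b) x) = f x := by
  by_cases hx : p x
  · rw [Equiv.Perm.ofSubtype_apply_of_mem _ hx]
    exact Equiv.apply_swap_eq_self (v := f ∘ Subtype.val) h ⟨x, hx⟩
  · rw [Equiv.Perm.ofSubtype_apply_of_not_mem _ hx]

namespace StarGraph

variable {m : ℕ} {C : Type*}

abbrev Leaf (m : ℕ) := {a : Fin (m + 1) // a ≠ 0}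

lemma exists_two_leaves (hm : 2 ≤ m) : ∃ a b : Fin (m + 1), a ≠ 0 ∧ b ≠ 0 ∧ a ≠ b :=
  ⟨⟨1, by omega⟩, ⟨2, by omega⟩, by simp [Fin.ext_iff], by simp [Fin.ext_iff],
    by simp [Fin.ext_iff]⟩

@[simp] lemma adj_iff {a b : Fin (m + 1)} :
    (_root_.starGraph m).Adj a b ↔ (a = 0 ↔ b ≠ 0) := by
  by_cases ha : a = 0 <;> by_cases hb : b = 0 <;> simp_all [_root_.starGraph, eq_comm]

@[simp] lemma ofSubtype_eq_zero_iff (σ : Equiv.Perm (Leaf m)) {a : Fin (m + 1)} :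
    Equiv.Perm.ofSubtype σ a = 0 ↔ a = 0 := by
  by_cases ha : a = 0
  · simp [ha, Equiv.Perm.ofSubtype_apply_of_not_mem]
  · simp [Equiv.Perm.ofSubtype_apply_of_mem σ ha, ha, (σ ⟨a, ha⟩).2]

def leafPerm (σ : Equiv.Perm (Leaf m)) : _root_.starGraph m ≃g _root_.starGraph m :=
  ⟨Equiv.Perm.ofSubtype σ, by simp⟩

lemma map_zero (hm : 2 ≤ m) (φ : _root_.starGraph m ≃g _root_.starGraph m) : φ 0 = 0 := by
  by_contra h
  have leaf_to_zero : ∀ a : Fin (m + 1), a ≠ 0 → φ a = 0 := fun a ha => by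
    simpa [h] using φ.map_adj_iff.2 (adj_iff.2 (iff_of_true rfl ha))
  obtain ⟨a, b, ha, hb, hab⟩ := exists_two_leaves hm
  exact hab (φ.injective ((leaf_to_zero a ha).trans (leaf_to_zero b hb).symm))

lemma map_eq_zero_iff (hm : 2 ≤ m) (φ : _root_.starGraph m ≃g _root_.starGraph m)
    {a : Fin (m + 1)} : φ a = 0 ↔ a = 0 := by
  conv_lhs => rw [← map_zero hm φ]
  exact φ.injective.eq_iff

lemma isDistEdgeColoring_iff (hm : 2 ≤ m) (c : (_root_.starGraph m).edgeSet → C) :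
    IsDistEdgeColoring (_root_.starGraph m) c ↔
      ∀ φ : _root_.starGraph m ≃g _root_.starGraph m,
        (∀ a, extendEdgeColoring c s(0, φ a) = extendEdgeColoring c s(0, a)) → ∀ x, φ x = x := by
  rw [isDistEdgeColoring_iff_extendEdgeColoring]
  refine forall_congr' fun φ => imp_congr_left ⟨fun h a => ?_, fun h e => ?_⟩
  · simpa [map_zero hm] using h s(0, a)
  · induction e using Sym2.ind with | _ x y => ?_
    by_cases he : s(x, y) ∈ (_root_.starGraph m).edgeSet
    · obtain rfl | rfl : x = 0 ∨ y = 0 := by simp at he; tauto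
      · simpa [map_zero hm] using h y
      · simpa [map_zero hm, Sym2.eq_swap] using h x
    · rw [extendEdgeColoring_of_not_mem (mt (φ.map_mem_edgeSet_iff).1 he),
        extendEdgeColoring_of_not_mem he]

lemma le_of_isDistEdgeColoring (hm : 2 ≤ m) {k : ℕ} (c : (_root_.starGraph m).edgeSet → Fin k)
    (hc : IsDistEdgeColoring (_root_.starGraph m) c) : m ≤ k := by
  rw [isDistEdgeColoring_iff hm] at hc
  let f : Leaf m → Option (Fin k) := fun a => extendEdgeColoring c s(0, a)
  have hf : Injective f := by
    intro a b hab
    have := hc (leafPerm (Equiv.swap a b))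
      (apply_ofSubtype_swap_eq_self (f := fun x => extendEdgeColoring c s(0, x)) hab) a
    simp only [leafPerm, RelIso.coe_fn_mk, Equiv.Perm.ofSubtype_apply_coe,
      Equiv.swap_apply_left] at this
    exact Subtype.ext this.symm
  have hf_mem : ∀ a, f a ∈ Set.range some := fun a =>
    ⟨_, (extendEdgeColoring_of_mem (adj_iff.2 (iff_of_true rfl a.2))).symm⟩
  calc m = Nat.card (Leaf m) := by simp
    _ ≤ Nat.card (Set.range (some : Fin k → Option (Fin k))) :=
      Nat.card_le_card_of_injective _ (hf.codRestrict hf_mem)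
    _ = k := by rw [Nat.card_range_of_injective (Option.some_injective _), Nat.card_fin]

def codeColoring (ι : ℕ → C) (e : (_root_.starGraph m).edgeSet) : C :=
  ι (Sym2.lift ⟨fun a b : Fin (m + 1) => (a : ℕ) + b - 1,
    fun _ _ => congrArg (· - 1) (Nat.add_comm _ _)⟩ e.1)

lemma isDistEdgeColoring_codeColoring (hm : 2 ≤ m) {ι : ℕ → C}
    (hι : Set.InjOn ι (Set.Iic (m - 1))) :
    IsDistEdgeColoring (_root_.starGraph m) (codeColoring ι) := by
  rw [isDistEdgeColoring_iff hm]
  intro φ hφ x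
  by_cases hx : x = 0
  · rw [hx, map_zero hm]
  have hφx : φ x ≠ 0 := (map_eq_zero_iff hm φ).not.2 hx
  have := hφ x
  rw [extendEdgeColoring_of_mem (adj_iff.2 (iff_of_true rfl hφx)),
    extendEdgeColoring_of_mem (adj_iff.2 (iff_of_true rfl hx)), Option.some_inj] at this
  have hcode := hι (by simp; omega) (by simp; omega) this
  simp only [Sym2.lift_mk, Fin.val_zero, zero_add] at hcode
  have := Fin.val_ne_zero_iff.2 hx
  have := Fin.val_ne_zero_iff.2 hφx
  exact Fin.ext (by omega)

theorem exists_isDistEdgeColoring_iff (hm : 2 ≤ m) (k : ℕ) :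
    (∃ c : (_root_.starGraph m).edgeSet → Fin k, IsDistEdgeColoring (_root_.starGraph m) c) ↔
      m ≤ k := by
  refine ⟨fun ⟨c, hc⟩ => le_of_isDistEdgeColoring hm c hc, fun hk => ?_⟩
  obtain ⟨ι, hι⟩ := exists_injOn_Iic (C := Fin k) (n := m - 1) (by simp; omega)
  exact ⟨codeColoring ι, isDistEdgeColoring_codeColoring hm hι⟩

end StarGraph

namespace MycStar

open StarGraph (Leaf exists_two_leaves)

variable {m : ℕ} {C : Type*}

abbrev Vert (m : ℕ) := Fin (m + 1) ⊕ Fin (m + 1) ⊕ PUnit.{1}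

abbrev graph (m : ℕ) : SimpleGraph (Vert m) := myc (_root_.starGraph m)

abbrev v (a : Fin (m + 1)) : Vert m := Sum.inl a

abbrev u (a : Fin (m + 1)) : Vert m := Sum.inr (Sum.inl a)

abbrev w : Vert m := Sum.inr (Sum.inr PUnit.unit)

/-- The leaves are the neighbours of `v 0`; the hub of a leaf is its neighbour other than `v 0`. -/
def hub : Vert m → Vert m
  | Sum.inl _ => u 0
  | Sum.inr _ => w

lemma hub_eq_or (x : Vert m) : hub x = u 0 ∨ hub x = w := by
  rcases x with _ | _ <;> simp [hub]

lemma hub_ne_center (x : Vert m) : hub x ≠ v 0 := by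
  rcases x with _ | _ <;> simp [hub]

lemma not_adj_center_iff {x : Vert m} :
    ¬(graph m).Adj (v 0) x ↔ x = v 0 ∨ x = u 0 ∨ x = w := by
  rcases x with a | a | ⟨⟩ <;> simp

lemma adj_leaf_iff {ℓ y : Vert m} (hℓ : (graph m).Adj (v 0) ℓ) :
    (graph m).Adj ℓ y ↔ y = v 0 ∨ y = hub ℓ := by
  rcases ℓ with a | a | ⟨⟩ <;> rcases y with b | b | ⟨⟩ <;> simp_all [hub]

lemma adj_hub {ℓ : Vert m} (hℓ : (graph m).Adj (v 0) ℓ) : (graph m).Adj ℓ (hub ℓ) :=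
  (adj_leaf_iff hℓ).2 (Or.inr rfl)

lemma hasThreeNeighbors_iff (hm : 2 ≤ m) {x : Vert m} :
    (graph m).HasThreeNeighbors x ↔ ¬(graph m).Adj (v 0) x := by
  constructor
  · rintro ⟨a, b, c, hab, hac, hbc, ha, hb, hc⟩ hx
    rw [adj_leaf_iff hx] at ha hb hc
    grind
  · obtain ⟨a, b, ha, hb, hab⟩ := exists_two_leaves hm
    intro hx
    rcases not_adj_center_iff.1 hx with rfl | rfl | rfl
    · exact ⟨v a, v b, u a, by simp_all⟩
    · exact ⟨v a, v b, w, by simp_all⟩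
    · exact ⟨u 0, u a, u b, by simp_all [eq_comm]⟩

lemma map_center (hm : 2 ≤ m) (φ : graph m ≃g graph m) : φ (v 0) = v 0 := by
  have no_big_nbr : ∀ y, (graph m).Adj (φ (v 0)) y → ¬(graph m).HasThreeNeighbors y :=
    fun y hy h3y => by
      have : (graph m).Adj (v 0) (φ.symm y) := by simpa using φ.symm.map_adj_iff.2 hy
      exact (hasThreeNeighbors_iff hm).1 (h3y.map φ.symm) this
  have h3 := ((hasThreeNeighbors_iff hm).2 ((graph m).irrefl)).map φ
  rcases not_adj_center_iff.1 ((hasThreeNeighbors_iff hm).1 h3) with h | h | h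
  · exact h
  · exact absurd ((hasThreeNeighbors_iff hm).2 (by simp)) (no_big_nbr w (by simp [h]))
  · exact absurd ((hasThreeNeighbors_iff hm).2 (by simp)) (no_big_nbr (u 0) (by simp [h]))

lemma map_leaf (hm : 2 ≤ m) (φ : graph m ≃g graph m) {ℓ : Vert m}
    (hℓ : (graph m).Adj (v 0) ℓ) : (graph m).Adj (v 0) (φ ℓ) := by
  simpa [map_center hm] using φ.map_adj_iff.2 hℓ

lemma map_hub (hm : 2 ≤ m) (φ : graph m ≃g graph m) {ℓ : Vert m}
    (hℓ : (graph m).Adj (v 0) ℓ) : φ (hub ℓ) = hub (φ ℓ) := by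
  rcases (adj_leaf_iff (map_leaf hm φ hℓ)).1 (φ.map_adj_iff.2 (adj_hub hℓ)) with h | h
  · exact absurd (φ.injective (h.trans (map_center hm φ).symm)) (hub_ne_center ℓ)
  · exact h

lemma map_hubs (hm : 2 ≤ m) (φ : graph m ≃g graph m) :
    (φ (u 0) = u 0 ∧ φ w = w) ∨ (φ (u 0) = w ∧ φ w = u 0) := by
  obtain ⟨a, -, ha, -, -⟩ := exists_two_leaves hm
  have hu : φ (u 0) = hub (φ (v a)) := map_hub hm φ (ℓ := v a) (by simpa)
  have hw : φ w = hub (φ (u a)) := map_hub hm φ (ℓ := u a) (by simpa)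
  have hne : φ (u 0) ≠ φ w := φ.injective.ne (by simp)
  rw [hu, hw] at hne ⊢
  rcases hub_eq_or (φ (v a)) with h | h <;> rcases hub_eq_or (φ (u a)) with h' | h' <;> simp_all

noncomputable def profile (c : (graph m).edgeSet → C) (ℓ : Vert m) : Option C × Option C :=
  (extendEdgeColoring c s(v 0, ℓ), extendEdgeColoring c s(ℓ, hub ℓ))

lemma mem_edgeSet_cases {e : Sym2 (Vert m)} (he : e ∈ (graph m).edgeSet) :
    (∃ ℓ, (graph m).Adj (v 0) ℓ ∧ (e = s(v 0, ℓ) ∨ e = s(ℓ, hub ℓ))) ∨ e = s(u 0, w) := by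
  induction e using Sym2.ind with | _ x y => ?_
  rw [mem_edgeSet] at he
  by_cases hx : (graph m).Adj (v 0) x
  · obtain rfl | rfl := (adj_leaf_iff hx).1 he
    · exact Or.inl ⟨x, hx, Or.inl Sym2.eq_swap⟩
    · exact Or.inl ⟨x, hx, Or.inr rfl⟩
  by_cases hy : (graph m).Adj (v 0) y
  · obtain rfl | rfl := (adj_leaf_iff hy).1 he.symm
    · exact Or.inl ⟨y, hy, Or.inl rfl⟩
    · exact Or.inl ⟨y, hy, Or.inr Sym2.eq_swap⟩
  rcases not_adj_center_iff.1 hx with rfl | rfl | rfl <;>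
    rcases not_adj_center_iff.1 hy with rfl | rfl | rfl <;> simp_all [Sym2.eq_swap]

theorem isDistEdgeColoring_iff (hm : 2 ≤ m) (c : (graph m).edgeSet → C) :
    IsDistEdgeColoring (graph m) c ↔ ∀ φ : graph m ≃g graph m,
      (∀ ℓ, (graph m).Adj (v 0) ℓ → profile c (φ ℓ) = profile c ℓ) → ∀ x, φ x = x := by
  rw [isDistEdgeColoring_iff_extendEdgeColoring]
  refine forall_congr' fun φ => imp_congr_left ⟨fun h ℓ hℓ => ?_, fun h e => ?_⟩
  · have h1 := h s(v 0, ℓ)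
    have h2 := h s(ℓ, hub ℓ)
    rw [Sym2.map_mk, map_center hm] at h1
    rw [Sym2.map_mk, map_hub hm φ hℓ] at h2
    exact Prod.ext h1 h2
  · by_cases he : e ∈ (graph m).edgeSet
    · rcases mem_edgeSet_cases he with ⟨ℓ, hℓ, rfl | rfl⟩ | rfl
      · simpa [profile, map_center hm] using congrArg Prod.fst (h ℓ hℓ)
      · simpa [profile, map_hub hm φ hℓ] using congrArg Prod.snd (h ℓ hℓ)
      · rcases map_hubs hm φ with ⟨h1, h2⟩ | ⟨h1, h2⟩ <;> simp [h1, h2, Sym2.eq_swap]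
    · rw [extendEdgeColoring_of_not_mem (mt (φ.map_mem_edgeSet_iff).1 he),
        extendEdgeColoring_of_not_mem he]

section LowerBound

open Equiv.Perm (ofSubtype)

variable {c : (graph m).edgeSet → C}

def levelPerm (σ τ : Equiv.Perm (Leaf m)) : graph m ≃g graph m where
  toEquiv := Equiv.sumCongr (ofSubtype σ) (Equiv.sumCongr (ofSubtype τ) (Equiv.refl _))
  map_rel_iff' := by rintro (a | a | _) (b | b | _) <;> simp

lemma levelPerm_v (σ τ : Equiv.Perm (Leaf m)) (a : Fin (m + 1)) :
    levelPerm σ τ (v a) = v (ofSubtype σ a) := rfl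

lemma levelPerm_u (σ τ : Equiv.Perm (Leaf m)) (a : Fin (m + 1)) :
    levelPerm σ τ (u a) = u (ofSubtype τ a) := rfl

lemma profile_levelPerm {σ τ : Equiv.Perm (Leaf m)}
    (hσ : ∀ x, profile c (v (ofSubtype σ x)) = profile c (v x))
    (hτ : ∀ x, profile c (u (ofSubtype τ x)) = profile c (u x)) (x : Vert m) :
    profile c (levelPerm σ τ x) = profile c x := by
  rcases x with a | a | _
  exacts [hσ a, hτ a, rfl]

def swapHalvesFun : Vert m → Vert m
  | Sum.inl a => if a = 0 then v 0 else u a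
  | Sum.inr (Sum.inl a) => if a = 0 then w else v a
  | Sum.inr (Sum.inr _) => u 0

lemma swapHalvesFun_involutive : Involutive (swapHalvesFun (m := m)) := by
  rintro (a | a | _) <;> simp only [swapHalvesFun] <;> split_ifs <;> simp_all

def swapHalves : graph m ≃g graph m where
  toEquiv := swapHalvesFun_involutive.toPerm _
  map_rel_iff' := by
    rintro (a | a | _) (b | b | _) <;> simp only [Involutive.coe_toPerm, swapHalvesFun] <;>
      (try split_ifs) <;> simp_all

lemma swapHalves_v {a : Fin (m + 1)} (ha : a ≠ 0) : swapHalves (v a) = u a := by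
  simp [swapHalves, swapHalvesFun, ha]

lemma swapHalves_u {a : Fin (m + 1)} (ha : a ≠ 0) : swapHalves (u a) = v a := by
  simp [swapHalves, swapHalvesFun, ha]

lemma swapHalves_u_zero : swapHalves (u 0 : Vert m) = w := by
  simp [swapHalves, swapHalvesFun]

lemma profile_mem_range {ℓ : Vert m} (hℓ : (graph m).Adj (v 0) ℓ) :
    profile c ℓ ∈ Set.range (Prod.map some some) := by
  have h1 : s(v 0, ℓ) ∈ (graph m).edgeSet := hℓ
  have h2 : s(ℓ, hub ℓ) ∈ (graph m).edgeSet := adj_hub hℓ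
  exact ⟨(c ⟨_, h1⟩, c ⟨_, h2⟩), by
    simp [profile, extendEdgeColoring_of_mem h1, extendEdgeColoring_of_mem h2]⟩

lemma injective_profile_v (hm : 2 ≤ m) (hc : IsDistEdgeColoring (graph m) c) :
    Injective fun a : Leaf m => profile c (v a) := by
  rw [isDistEdgeColoring_iff hm] at hc
  intro a b hab
  have := hc (levelPerm (Equiv.swap a b) 1) (fun ℓ _ => profile_levelPerm
    (apply_ofSubtype_swap_eq_self (f := fun x => profile c (v x)) hab) (by simp) ℓ) (v a)
  exact Subtype.ext (by simpa [levelPerm, eq_comm] using this)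

lemma injective_profile_u (hm : 2 ≤ m) (hc : IsDistEdgeColoring (graph m) c) :
    Injective fun a : Leaf m => profile c (u a) := by
  rw [isDistEdgeColoring_iff hm] at hc
  intro a b hab
  have := hc (levelPerm 1 (Equiv.swap a b)) (fun ℓ _ => profile_levelPerm (by simp)
    (apply_ofSubtype_swap_eq_self (f := fun x => profile c (u x)) hab) ℓ) (u a)
  exact Subtype.ext (by simpa [levelPerm, eq_comm] using this)

lemma profile_swapHalves_levelPerm {ρ : Equiv.Perm (Leaf m)}
    (hρ : ∀ a, profile c (u (ρ a)) = profile c (v a)) {ℓ : Vert m}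
    (hℓ : (graph m).Adj (v 0) ℓ) :
    profile c (((levelPerm ρ ρ⁻¹).trans swapHalves) ℓ) = profile c ℓ := by
  rcases ℓ with a | a | _
  · have ha : a ≠ 0 := by simpa using hℓ
    rw [RelIso.trans_apply, levelPerm_v, Equiv.Perm.ofSubtype_apply_of_mem ρ ha,
      swapHalves_v (ρ _).2, hρ]
  · have ha : a ≠ 0 := by simpa using hℓ
    rw [RelIso.trans_apply, levelPerm_u, Equiv.Perm.ofSubtype_apply_of_mem ρ⁻¹ ha,
      swapHalves_u (ρ⁻¹ _).2, ← hρ]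
    simp
  · simp at hℓ

theorem le_sq_of_isDistEdgeColoring (hm : 2 ≤ m) {k : ℕ} (c : (graph m).edgeSet → Fin k)
    (hc : IsDistEdgeColoring (graph m) c) : m + 1 ≤ k ^ 2 := by
  have hv := injective_profile_v hm hc
  have hu := injective_profile_u hm hc
  rw [isDistEdgeColoring_iff hm] at hc
  by_contra! hk
  have hcard : Nat.card (Set.range (Prod.map (some : Fin k → _) (some : Fin k → _))) = k ^ 2 := by
    rw [Nat.card_range_of_injective ((Option.some_injective _).prodMap (Option.some_injective _))]
    simp [sq]
  obtain ⟨ρ, hρ⟩ := exists_equiv_apply_eq_of_injective hv hu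
    (fun a => profile_mem_range (by simpa using a.2))
    (fun a => profile_mem_range (by simpa using a.2)) (by rw [hcard]; simp; omega)
  have := hc _ (fun ℓ hℓ => profile_swapHalves_levelPerm hρ hℓ) (u 0)
  rw [RelIso.trans_apply, levelPerm_u, Equiv.Perm.ofSubtype_apply_of_not_mem ρ⁻¹ (not_not.2 rfl),
    swapHalves_u_zero] at this
  simp at this

end LowerBound

section UpperBound

def code : Vert m → ℕ
  | Sum.inl a => a
  | Sum.inr (Sum.inl a) => a - 1
  | Sum.inr (Sum.inr _) => 0

lemma code_le (x : Vert m) : code x ≤ m := by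
  rcases x with a | a | _ <;> simp [code]; omega

/-- Leaf `ℓ` gets the colour pair `ι (code ℓ)`; as `code` vanishes at `v 0`, `u 0` and `w`,
summing the codes of the two ends of an edge recovers the code of its leaf. -/
def codeColoring (ι : ℕ → C × C) (e : (graph m).edgeSet) : C :=
  let p := ι (Sym2.lift ⟨fun x y => code x + code y, fun _ _ => Nat.add_comm _ _⟩ e.1)
  if v 0 ∈ e.1 then p.1 else p.2

lemma profile_codeColoring {ι : ℕ → C × C} {ℓ : Vert m} (hℓ : (graph m).Adj (v 0) ℓ) :
    profile (codeColoring ι) ℓ = Prod.map some some (ι (code ℓ)) := by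
  have h1 : s(v 0, ℓ) ∈ (graph m).edgeSet := hℓ
  have h2 : s(ℓ, hub ℓ) ∈ (graph m).edgeSet := adj_hub hℓ
  rw [profile, extendEdgeColoring_of_mem h1, extendEdgeColoring_of_mem h2]
  rcases ℓ with a | a | _ <;> simp_all [codeColoring, code, hub, eq_comm] <;> rfl

lemma eq_of_hub_eq_of_code_eq {ℓ ℓ' : Vert m} (hℓ : (graph m).Adj (v 0) ℓ)
    (hℓ' : (graph m).Adj (v 0) ℓ') (hhub : hub ℓ = hub ℓ') (hcode : code ℓ = code ℓ') :
    ℓ = ℓ' := by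
  rcases ℓ with a | a | _ <;> rcases ℓ' with b | b | _ <;> simp_all [hub, code]
  all_goals
    have := Fin.val_ne_zero_iff.2 hℓ
    have := Fin.val_ne_zero_iff.2 hℓ'
    exact Fin.ext (by omega)

lemma code_ne_zero_of_hub_eq {ℓ : Vert m} (hℓ : (graph m).Adj (v 0) ℓ) (hhub : hub ℓ = u 0) :
    code ℓ ≠ 0 := by
  rcases ℓ with a | a | _ <;> simp_all [hub, code]

theorem isDistEdgeColoring_codeColoring (hm : 2 ≤ m) {ι : ℕ → C × C}
    (hι : Set.InjOn ι (Set.Iic m)) : IsDistEdgeColoring (graph m) (codeColoring ι) := by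
  rw [isDistEdgeColoring_iff hm]
  intro φ hφ
  have hcode : ∀ ℓ, (graph m).Adj (v 0) ℓ → code (φ ℓ) = code ℓ := fun ℓ hℓ => by
    have := hφ ℓ hℓ
    rw [profile_codeColoring (map_leaf hm φ hℓ), profile_codeColoring hℓ] at this
    exact hι (code_le _) (code_le _)
      ((Option.some_injective _).prodMap (Option.some_injective _) this)
  rcases map_hubs hm φ with ⟨hu, hw⟩ | ⟨hu, hw⟩
  · have hhub : ∀ x, φ (hub x) = hub x := fun x => by
      rcases hub_eq_or x with h | h <;> rw [h] <;> assumption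
    intro x
    by_cases hx : (graph m).Adj (v 0) x
    · exact eq_of_hub_eq_of_code_eq (map_leaf hm φ hx) hx
        (by rw [← map_hub hm φ hx, hhub]) (hcode x hx)
    · rcases not_adj_center_iff.1 hx with rfl | rfl | rfl
      exacts [map_center hm φ, hu, hw]
  · exfalso
    have h1 : (graph m).Adj (v 0) (u ⟨1, by omega⟩) := by simp [Fin.ext_iff]
    exact code_ne_zero_of_hub_eq (map_leaf hm φ h1) (by rw [← map_hub hm φ h1, ← hw]; rfl)
      ((hcode _ h1).trans (by simp [code]))

end UpperBound

theorem exists_isDistEdgeColoring_iff (hm : 2 ≤ m) (k : ℕ) :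
    (∃ c : (graph m).edgeSet → Fin k, IsDistEdgeColoring (graph m) c) ↔ m + 1 ≤ k ^ 2 := by
  refine ⟨fun ⟨c, hc⟩ => le_sq_of_isDistEdgeColoring hm c hc, fun hk => ?_⟩
  obtain ⟨ι, hι⟩ := exists_injOn_Iic (C := Fin k × Fin k) (n := m) (by simpa [sq] using hk)
  exact ⟨codeColoring ι, isDistEdgeColoring_codeColoring hm hι⟩

end MycStar

theorem distIndex_myc_star (m : ℕ) (hm : 2 ≤ m) :
    distIndex (myc (_root_.starGraph m)) = sInf {r : ℕ | m + 1 ≤ r ^ 2} ∧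
      distIndex (myc (_root_.starGraph m)) ≤ m ∧ distIndex (_root_.starGraph m) = m := by
  have hmyc : distIndex (myc (_root_.starGraph m)) = sInf {r : ℕ | m + 1 ≤ r ^ 2} :=
    distIndex_eq_sInf (MycStar.exists_isDistEdgeColoring_iff hm)
  have hstar : distIndex (_root_.starGraph m) = m :=
    (distIndex_eq_sInf (StarGraph.exists_isDistEdgeColoring_iff hm)).trans csInf_Ici
  refine ⟨hmyc, hmyc ▸ Nat.sInf_le ?_, hstar⟩
  show m + 1 ≤ m ^ 2
  nlinarith
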